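/- Assume ∫_{[0,1]^d} Ψ(x) dx = 0 and let β := ∫_{[0,1]^d} r(x)·Ψ(x) dx. There exists a constant κ > 0, depending only on E[U⁴], E[V⁴], ‖f‖_∞ and ∫_{[0,1]^d} Ψ(x)² dx, such that for every n ≥ 3, the truncated estimator β̂ := (1/n)·Σ_{i=1}^n Y_i²·Ψ(X_i)·1_{{|Y_i²·Ψ(X_i)| ≤ ρ_n}}, with ρ_n := √(n/ln n), satisfies P(|β̂ − β| ≥ κ·√((ln n)/n)) ≤ 2·n^{−4}. (This is Lemma 3 of the paper under assumption set H1, stated for a general bounded coefficient function Ψ with zero integral.) -/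

import Mathlib

/-!
Write `W = Y² Ψ(X)` and `m = E[W²]`. Expanding the square and using independence, `E[U²] = 1`,
`E[U] E[V] = 0` and `∫ Ψ = 0` gives `E[W] = β`; the fourth moments of `U`, `V` and the bounds on
`f`, `Ψ` give `m < ∞`. Truncating at level `ρ` moves the mean by at most `m / ρ` (Markov) and
leaves centred summands bounded by `2ρ` with variance at most `m`. For such summands
`E[exp(tZ)] ≤ exp(t² m)` as soon as `2tρ ≤ 1`, so Chernoff's bound with `t = 1 / (2ρ)` and
`ρ = √(n / ln n)` bounds the probability of a deviation `(2m + 8) √(ln n / n)` by `2 n⁻⁴`.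
-/

open MeasureTheory ProbabilityTheory Real

section Chernoff

variable {Ω : Type*} [MeasurableSpace Ω] {P : Measure Ω} [IsProbabilityMeasure P]

lemma mgf_le_exp_of_abs_le {Z : Ω → ℝ} {b v t : ℝ} (hZ : AEStronglyMeasurable Z P)
    (hbd : ∀ᵐ ω ∂P, |Z ω| ≤ b) (hmean : P[Z] = 0) (hvar : P[Z ^ 2] ≤ v)
    (ht : |t| * b ≤ 1) :
    mgf Z P t ≤ exp (t ^ 2 * v) := by
  have hZint : Integrable Z P := .of_bound hZ b hbd
  have hZ2int : Integrable (Z ^ 2) P :=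
    .of_bound (hZ.pow 2) (b ^ 2) <| hbd.mono fun ω h => by
      simpa [abs_pow] using pow_le_pow_left₀ (abs_nonneg _) h 2
  have htaylor : ∀ᵐ ω ∂P, exp (t * Z ω) ≤ 1 + t * Z ω + t ^ 2 * Z ω ^ 2 :=
    hbd.mono fun ω h => by
      have hx : |t * Z ω| ≤ 1 := by
        rw [abs_mul]; exact (mul_le_mul_of_nonneg_left h (abs_nonneg t)).trans ht
      have := (abs_le.1 (abs_exp_sub_one_sub_id_le hx)).2
      linarith [mul_pow t (Z ω) 2]
  have hlin : Integrable (fun ω => 1 + t * Z ω) P := (integrable_const 1).add (hZint.const_mul t)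
  have hquad : Integrable (fun ω => t ^ 2 * Z ω ^ 2) P := hZ2int.const_mul _
  calc mgf Z P t ≤ ∫ ω, (1 + t * Z ω + t ^ 2 * Z ω ^ 2) ∂P :=
        integral_mono_of_nonneg (ae_of_all _ fun ω => (exp_pos _).le) (hlin.add hquad) htaylor
    _ = 1 + t ^ 2 * P[Z ^ 2] := by
        rw [integral_add hlin hquad, integral_add (integrable_const 1) (hZint.const_mul t),
          integral_const_mul, integral_const_mul, hmean]
        simp
    _ ≤ 1 + t ^ 2 * v := by gcongr
    _ ≤ exp (t ^ 2 * v) := by linarith [add_one_le_exp (t ^ 2 * v)]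

lemma measureReal_abs_sum_ge_le {ι : Type*} [Fintype ι] {Z : ι → Ω → ℝ}
    (hmeas : ∀ i, Measurable (Z i)) (hind : iIndepFun Z P) {b v t : ℝ}
    (hbd : ∀ i, ∀ᵐ ω ∂P, |Z i ω| ≤ b) (hmean : ∀ i, P[Z i] = 0)
    (hvar : ∀ i, P[Z i ^ 2] ≤ v)
    (ht0 : 0 ≤ t) (ht : t * b ≤ 1) (ε : ℝ) :
    P.real {ω | ε ≤ |∑ i, Z i ω|} ≤ 2 * exp (-t * ε + Fintype.card ι * (t ^ 2 * v)) := by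
  have hint : ∀ s : ℝ, Integrable (fun ω => exp (s * (∑ i, Z i) ω)) P := fun s =>
    hind.integrable_exp_mul_sum hmeas fun i _ =>
      .of_bound ((hmeas i).const_mul s).exp.aestronglyMeasurable (exp (|s| * b)) <|
        (hbd i).mono fun ω h => by
          rw [norm_of_nonneg (exp_pos _).le, exp_le_exp]
          exact (le_abs_self _).trans (by rw [abs_mul]; gcongr)
  set tail := exp (-t * ε) * exp (Fintype.card ι * (t ^ 2 * v))
  have hmgf : ∀ s, |s| = t → exp (-t * ε) * mgf (∑ i, Z i) P s ≤ tail := by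
    intro s hs
    refine mul_le_mul_of_nonneg_left ?_ (exp_pos _).le
    rw [hind.mgf_sum hmeas, exp_nat_mul, ← Finset.card_univ, ← Finset.prod_const]
    refine Finset.prod_le_prod (fun i _ => mgf_nonneg) fun i _ => ?_
    rw [← hs, sq_abs]
    exact mgf_le_exp_of_abs_le (hmeas i).aestronglyMeasurable (hbd i) (hmean i) (hvar i) (hs ▸ ht)
  have hupper : P.real {ω | ε ≤ ∑ i, Z i ω} ≤ tail := by
    have := measure_ge_le_exp_mul_mgf ε ht0 (hint t)
    simp only [Finset.sum_apply] at this
    exact this.trans (hmgf t (abs_of_nonneg ht0))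
  have hlower : P.real {ω | ∑ i, Z i ω ≤ -ε} ≤ tail := by
    have := measure_le_le_exp_mul_mgf (-ε) (neg_nonpos.2 ht0) (hint (-t))
    simp only [Finset.sum_apply, neg_mul_neg] at this
    exact this.trans (hmgf (-t) (by rw [abs_neg, abs_of_nonneg ht0]))
  calc P.real {ω | ε ≤ |∑ i, Z i ω|}
      ≤ P.real ({ω | ∑ i, Z i ω ≤ -ε} ∪ {ω | ε ≤ ∑ i, Z i ω}) :=
        measureReal_mono fun ω (hω : ε ≤ _) => le_abs'.1 hω
    _ ≤ P.real {ω | ∑ i, Z i ω ≤ -ε} + P.real {ω | ε ≤ ∑ i, Z i ω} :=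
        measureReal_union_le _ _
    _ ≤ tail + tail := add_le_add hlower hupper
    _ = 2 * exp (-t * ε + Fintype.card ι * (t ^ 2 * v)) := by rw [exp_add]; ring

end Chernoff

noncomputable def truncate (ρ x : ℝ) : ℝ := if |x| ≤ ρ then x else 0

section Truncation

variable {ρ : ℝ}

@[fun_prop]
lemma measurable_truncate : Measurable (truncate ρ) :=
  Measurable.ite (measurableSet_le measurable_id.abs measurable_const) measurable_id
    measurable_const

lemma abs_truncate_le (hρ : 0 ≤ ρ) (x : ℝ) : |truncate ρ x| ≤ ρ := by
  unfold truncate; split_ifs with h <;> simp [h, hρ]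

lemma sq_truncate_le (x : ℝ) : truncate ρ x ^ 2 ≤ x ^ 2 := by
  unfold truncate; split_ifs <;> simp [sq_nonneg]

lemma abs_truncate_sub_le (hρ : 0 < ρ) (x : ℝ) : |truncate ρ x - x| ≤ x ^ 2 / ρ := by
  unfold truncate
  split_ifs with h
  · simpa using div_nonneg (sq_nonneg x) hρ.le
  · rw [zero_sub, abs_neg, le_div_iff₀ hρ, ← sq_abs x, sq]
    exact mul_le_mul_of_nonneg_left (not_le.1 h).le (abs_nonneg x)

variable {Ω : Type*} [MeasurableSpace Ω] {P : Measure Ω} {W : Ω → ℝ}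

lemma integrable_truncate_comp [IsFiniteMeasure P] (hρ : 0 ≤ ρ)
    (hW : AEStronglyMeasurable W P) : Integrable (fun ω => truncate ρ (W ω)) P :=
  .of_bound (measurable_truncate.comp_aemeasurable hW.aemeasurable).aestronglyMeasurable ρ
    (ae_of_all _ fun _ => abs_truncate_le hρ _)

lemma abs_integral_truncate_sub_le [IsFiniteMeasure P] (hρ : 0 < ρ) (hW : MemLp W 2 P) :
    |P[fun ω => truncate ρ (W ω)] - P[W]| ≤ P[W ^ 2] / ρ := by
  rw [← integral_sub (integrable_truncate_comp hρ.le hW.1) (hW.integrable one_le_two),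
    ← integral_div]
  exact (abs_integral_le_integral_abs).trans <|
    integral_mono ((integrable_truncate_comp hρ.le hW.1).sub (hW.integrable one_le_two)).abs
      (hW.integrable_sq.div_const ρ) fun ω => abs_truncate_sub_le hρ (W ω)

lemma variance_truncate_le [IsProbabilityMeasure P] (hW : MemLp W 2 P) :
    Var[fun ω => truncate ρ (W ω); P] ≤ P[W ^ 2] :=
  (variance_le_expectation_sq
    (measurable_truncate.comp_aemeasurable hW.1.aemeasurable).aestronglyMeasurable).trans <|
    integral_mono_of_nonneg (ae_of_all _ fun _ => sq_nonneg _) hW.integrable_sq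
      (ae_of_all _ fun ω => sq_truncate_le (W ω))

end Truncation

lemma mul_le_abs_sum_sub_of_add_le_abs_mean_sub {n : ℕ} (x : Fin n → ℝ) {a b c δ : ℝ}
    (hab : |a - b| ≤ c) (h : c + δ ≤ |(1 / n) * ∑ i, x i - b|) :
    n * δ ≤ |∑ i, (x i - a)| := by
  rcases n.eq_zero_or_pos with rfl | hn
  · simp
  have hn' : (0 : ℝ) < n := Nat.cast_pos.2 hn
  have hsplit : (1 / n) * ∑ i, x i - b = (∑ i, (x i - a)) / n + (a - b) := by
    rw [Finset.sum_sub_distrib, Finset.sum_const, Finset.card_univ, Fintype.card_fin,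
      nsmul_eq_mul]
    field_simp
    ring
  have := (hsplit ▸ h).trans (abs_add_le _ _)
  rw [abs_div, abs_of_pos hn'] at this
  rw [mul_comm, ← le_div_iff₀ hn']
  linarith

section TruncatedMean

variable {Ω : Type*} [MeasurableSpace Ω] {P : Measure Ω} [IsProbabilityMeasure P]
  {W : Ω → ℝ} {n : ℕ} {Ws : Fin n → Ω → ℝ}

theorem measureReal_truncated_mean_deviation_le (hW : MemLp W 2 P)
    (hWs : ∀ i, Measurable (Ws i)) (hind : iIndepFun Ws P)
    (hid : ∀ i, IdentDistrib (Ws i) W P P) {ρ t : ℝ} (hρ : 0 < ρ) (ht0 : 0 ≤ t)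
    (ht : t * (2 * ρ) ≤ 1) (δ : ℝ) :
    P.real {ω | P[W ^ 2] / ρ + δ ≤ |(1 / n) * ∑ i, truncate ρ (Ws i ω) - P[W]|}
      ≤ 2 * exp (-t * (n * δ) + n * (t ^ 2 * P[W ^ 2])) := by
  set μT := P[fun ω => truncate ρ (W ω)]
  set center : ℝ → ℝ := fun x => truncate ρ x - μT
  have hcenter : Measurable center := by fun_prop
  set Z : Fin n → Ω → ℝ := fun i => center ∘ Ws i
  have hZid : ∀ i, IdentDistrib (Z i) (center ∘ W) P P := fun i => (hid i).comp hcenter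
  have hZmean : ∀ i, P[Z i] = 0 := fun i => by
    rw [(hZid i).integral_eq, Function.comp_def,
      integral_sub (integrable_truncate_comp hρ.le hW.1) (integrable_const _)]
    simp [μT]
  have hZvar : ∀ i, P[Z i ^ 2] ≤ P[W ^ 2] := fun i =>
    calc P[Z i ^ 2] = Var[fun ω => truncate ρ (W ω); P] := by
          rw [variance_eq_integral (μ := P) (X := fun ω => truncate ρ (W ω))
            (measurable_truncate.comp_aemeasurable hW.1.aemeasurable)]
          exact ((hZid i).comp (measurable_id.pow_const 2)).integral_eq
      _ ≤ P[W ^ 2] := variance_truncate_le hW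
  have hμT : |μT| ≤ ρ := by
    simpa using norm_integral_le_of_norm_le_const (μ := P) (f := fun ω => truncate ρ (W ω))
      (ae_of_all _ fun ω => abs_truncate_le hρ.le (W ω))
  have hZbd : ∀ i, ∀ᵐ ω ∂P, |Z i ω| ≤ 2 * ρ := fun i => ae_of_all _ fun ω =>
    (abs_sub _ _).trans (by linarith [abs_truncate_le hρ.le (Ws i ω)])
  have htail := measureReal_abs_sum_ge_le (fun i => hcenter.comp (hWs i))
    (hind.comp _ fun _ => hcenter) hZbd hZmean hZvar ht0 ht (n * δ)
  rw [Fintype.card_fin] at htail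
  exact (measureReal_mono fun ω hω =>
    mul_le_abs_sum_sub_of_add_le_abs_mean_sub _ (abs_integral_truncate_sub_le hρ hW) hω).trans
    htail

theorem measure_truncated_mean_deviation_le_two_div_pow_four (hW : MemLp W 2 P) (hn : 1 < n)
    (hWs : ∀ i, Measurable (Ws i)) (hind : iIndepFun Ws P)
    (hid : ∀ i, IdentDistrib (Ws i) W P P) :
    P {ω | (2 * P[W ^ 2] + 8) * √(log n / n)
        ≤ |(1 / n) * ∑ i, truncate √(n / log n) (Ws i ω) - P[W]|}
      ≤ ENNReal.ofReal (2 / n ^ 4) := by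
  have hn' : (1 : ℝ) < n := by exact_mod_cast hn
  have hL : 0 < log n := log_pos hn'
  set s := √(log n / n)
  have hs : 0 < s := sqrt_pos.2 (by positivity)
  have hρ : √(n / log n) = s⁻¹ := by rw [← sqrt_inv, inv_div]
  have hns : n * s ^ 2 = log n := by rw [sq_sqrt (by positivity)]; field_simp
  have key := measureReal_truncated_mean_deviation_le hW hWs hind hid (inv_pos.2 hs)
    (t := s / 2) (by positivity) (le_of_eq (by field_simp)) ((P[W ^ 2] + 8) * s)
  set m := P[W ^ 2]
  have hm : 0 ≤ m := integral_nonneg fun ω => sq_nonneg (W ω)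
  rw [ENNReal.le_ofReal_iff_toReal_le (measure_ne_top _ _) (by positivity), ← measureReal_def,
    hρ]
  calc P.real {ω | (2 * m + 8) * s ≤ |(1 / n) * ∑ i, truncate s⁻¹ (Ws i ω) - P[W]|}
      ≤ 2 * exp (-(s / 2) * (n * ((m + 8) * s)) + n * ((s / 2) ^ 2 * m)) := by
        convert key using 5
        rw [div_inv_eq_mul]
        ring
    _ ≤ 2 * exp (-(4 * log n)) := by
        gcongr
        nlinarith [hns]
    _ = 2 / n ^ 4 := by
        rw [show 4 * log n = log (n ^ 4) by rw [log_pow]; norm_num, exp_neg,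
          exp_log (by positivity), div_eq_mul_inv]

end TruncatedMean

section Model

variable {Ω : Type*} [MeasurableSpace Ω] {P : Measure Ω}

lemma memLp_two_of_integrable_pow_four [IsFiniteMeasure P] {U : Ω → ℝ}
    (hU : AEStronglyMeasurable U P)
    (hU4 : Integrable (fun ω => U ω ^ 4) P) : MemLp U 2 P :=
  (memLp_two_iff_integrable_sq hU).2 <|
    (hU4.add (integrable_const 1)).mono' (hU.pow 2) <| ae_of_all _ fun ω => by
      rw [norm_of_nonneg (sq_nonneg _)]
      show U ω ^ 2 ≤ U ω ^ 4 + 1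
      nlinarith [sq_nonneg (U ω ^ 2 - 1)]

lemma memLp_two_sq_add_mul {a c U V : Ω → ℝ} (ha : AEStronglyMeasurable a P)
    (hc : AEStronglyMeasurable c P) (hU : AEStronglyMeasurable U P)
    (hV : AEStronglyMeasurable V P) {Ca Cc : ℝ} (hab : ∀ᵐ ω ∂P, |a ω| ≤ Ca)
    (hcb : ∀ᵐ ω ∂P, |c ω| ≤ Cc) (hU4 : Integrable (fun ω => U ω ^ 4) P)
    (hV4 : Integrable (fun ω => V ω ^ 4) P) :
    MemLp (fun ω => (a ω * U ω + V ω) ^ 2 * c ω) 2 P := by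
  refine (memLp_two_iff_integrable_sq (((ha.mul hU).add hV).pow 2 |>.mul hc)).2 <|
    (((hU4.const_mul (Ca ^ 4)).add hV4).const_mul (8 * Cc ^ 2)).mono'
      ((((ha.mul hU).add hV).pow 2 |>.mul hc).pow 2) ?_
  filter_upwards [hab, hcb] with ω ha hc
  have ha4 : a ω ^ 4 ≤ Ca ^ 4 := by
    simpa only [Even.pow_abs ⟨2, rfl⟩] using pow_le_pow_left₀ (abs_nonneg _) ha 4
  have hc2 : c ω ^ 2 ≤ Cc ^ 2 :=
    sq_le_sq.2 (hc.trans (le_abs_self _))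
  have hquartic : (a ω * U ω + V ω) ^ 4 ≤ 8 * (Ca ^ 4 * U ω ^ 4 + V ω ^ 4) := by
    have : (a ω * U ω) ^ 4 ≤ Ca ^ 4 * U ω ^ 4 := by
      rw [mul_pow]; exact mul_le_mul_of_nonneg_right ha4 (by positivity)
    nlinarith [sq_nonneg (a ω * U ω - V ω), sq_nonneg (a ω * U ω + V ω),
      sq_nonneg ((a ω * U ω) ^ 2 - V ω ^ 2)]
  rw [norm_of_nonneg (sq_nonneg _)]
  calc ((a ω * U ω + V ω) ^ 2 * c ω) ^ 2 = (a ω * U ω + V ω) ^ 4 * c ω ^ 2 := by ring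
    _ ≤ 8 * (Ca ^ 4 * U ω ^ 4 + V ω ^ 4) * Cc ^ 2 := by gcongr
    _ = 8 * Cc ^ 2 * (Ca ^ 4 * U ω ^ 4 + V ω ^ 4) := by ring

lemma integral_sq_add_mul_eq_of_integrable [IsFiniteMeasure P] {E : Type*} [MeasurableSpace E]
    {X : Ω → E} {U V : Ω → ℝ} {f Ψ : E → ℝ} (hf : Measurable f) (hΨ : Measurable Ψ)
    (hXU : IndepFun X U P) (hXUV : IndepFun (fun ω => (X ω, U ω)) V P)
    (hU : MemLp U 2 P) (hV : MemLp V 2 P)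
    (hA : Integrable (fun ω => f (X ω) ^ 2 * Ψ (X ω)) P)
    (hB : Integrable (fun ω => f (X ω) * Ψ (X ω)) P) (hC : Integrable (fun ω => Ψ (X ω)) P) :
    ∫ ω, (f (X ω) * U ω + V ω) ^ 2 * Ψ (X ω) ∂P
      = (∫ ω, f (X ω) ^ 2 * Ψ (X ω) ∂P) * ∫ ω, U ω ^ 2 ∂P
        + 2 * ((∫ ω, f (X ω) * Ψ (X ω) ∂P) * P[U] * P[V])
        + (∫ ω, Ψ (X ω) ∂P) * ∫ ω, V ω ^ 2 ∂P := by
  have hAU : IndepFun (fun ω => f (X ω) ^ 2 * Ψ (X ω)) (fun ω => U ω ^ 2) P :=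
    hXU.comp (φ := fun x => f x ^ 2 * Ψ x) (ψ := fun u => u ^ 2) (by fun_prop) (by fun_prop)
  have hBU : IndepFun (fun ω => f (X ω) * Ψ (X ω)) U P :=
    hXU.comp (φ := fun x => f x * Ψ x) (ψ := id) (by fun_prop) measurable_id
  have hBUV : IndepFun (fun ω => f (X ω) * Ψ (X ω) * U ω) V P :=
    hXUV.comp (φ := fun p : E × ℝ => f p.1 * Ψ p.1 * p.2) (ψ := id) (by fun_prop)
      measurable_id
  have hCV : IndepFun (fun ω => Ψ (X ω)) (fun ω => V ω ^ 2) P :=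
    hXUV.comp (φ := fun p : E × ℝ => Ψ p.1) (ψ := fun u => u ^ 2) (by fun_prop) (by fun_prop)
  have hBUint : Integrable (fun ω => f (X ω) * Ψ (X ω) * U ω) P :=
    hBU.integrable_mul hB (hU.integrable one_le_two)
  have hAUint : Integrable (fun ω => f (X ω) ^ 2 * Ψ (X ω) * U ω ^ 2) P :=
    hAU.integrable_mul hA hU.integrable_sq
  have hBUVint : Integrable (fun ω => 2 * (f (X ω) * Ψ (X ω) * U ω * V ω)) P :=
    (hBUV.integrable_mul hBUint (hV.integrable one_le_two)).const_mul 2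
  have hCVint : Integrable (fun ω => Ψ (X ω) * V ω ^ 2) P :=
    hCV.integrable_mul hC hV.integrable_sq
  have hAUBUVint : Integrable (fun ω => f (X ω) ^ 2 * Ψ (X ω) * U ω ^ 2
      + 2 * (f (X ω) * Ψ (X ω) * U ω * V ω)) P := hAUint.add hBUVint
  calc ∫ ω, (f (X ω) * U ω + V ω) ^ 2 * Ψ (X ω) ∂P
      = ∫ ω, (f (X ω) ^ 2 * Ψ (X ω) * U ω ^ 2
          + 2 * (f (X ω) * Ψ (X ω) * U ω * V ω) + Ψ (X ω) * V ω ^ 2) ∂P :=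
        integral_congr_ae (ae_of_all _ fun ω => by ring)
    _ = _ := by
        rw [integral_add hAUBUVint hCVint, integral_add hAUint hBUVint,
          integral_const_mul, hAU.integral_fun_mul_eq_mul_integral hA.1 hU.integrable_sq.1,
          hBUV.integral_fun_mul_eq_mul_integral hBUint.1 hV.1,
          hBU.integral_fun_mul_eq_mul_integral hB.1 hU.1,
          hCV.integral_fun_mul_eq_mul_integral hC.1 hV.integrable_sq.1]

lemma integral_sq_add_mul_eq [IsFiniteMeasure P] {E : Type*} [MeasurableSpace E] {X : Ω → E}
    {U V : Ω → ℝ} {f Ψ : E → ℝ} (hX : Measurable X) (hf : Measurable f)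
    (hΨ : Measurable Ψ) {Cf CΨ : ℝ} (hfb : ∀ᵐ ω ∂P, |f (X ω)| ≤ Cf)
    (hΨb : ∀ᵐ ω ∂P, |Ψ (X ω)| ≤ CΨ)
    (hXU : IndepFun X U P) (hXUV : IndepFun (fun ω => (X ω, U ω)) V P)
    (hU : MemLp U 2 P) (hV : MemLp V 2 P) :
    ∫ ω, (f (X ω) * U ω + V ω) ^ 2 * Ψ (X ω) ∂P
      = (∫ ω, f (X ω) ^ 2 * Ψ (X ω) ∂P) * ∫ ω, U ω ^ 2 ∂P
        + 2 * ((∫ ω, f (X ω) * Ψ (X ω) ∂P) * P[U] * P[V])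
        + (∫ ω, Ψ (X ω) ∂P) * ∫ ω, V ω ^ 2 ∂P := by
  have hC : Integrable (fun ω => Ψ (X ω)) P :=
    .of_bound (hΨ.comp hX).aestronglyMeasurable CΨ hΨb
  have hB : Integrable (fun ω => f (X ω) * Ψ (X ω)) P :=
    hC.bdd_mul (hf.comp hX).aestronglyMeasurable hfb
  have hA : Integrable (fun ω => f (X ω) ^ 2 * Ψ (X ω)) P := by
    simpa only [sq, mul_assoc, Function.comp_apply] using
      hB.bdd_mul (hf.comp hX).aestronglyMeasurable hfb
  exact integral_sq_add_mul_eq_of_integrable hf hΨ hXU hXUV hU hV hA hB hC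

end Model

theorem truncated_coefficient_concentration_H1_general
    {Ω : Type*} [MeasurableSpace Ω] (P : Measure Ω) [IsProbabilityMeasure P]
    (d : ℕ)
    (X : Ω → (Fin d → ℝ)) (U V : Ω → ℝ)
    (hXm : Measurable X) (hUm : Measurable U) (hVm : Measurable V)
    -- X is uniformly distributed on the cube [0,1]^d
    (hXlaw : Measure.map X P = volume.restrict (Set.Icc (0 : Fin d → ℝ) 1))
    -- E[U⁴] < ∞ and E[V⁴] < ∞
    (hU4 : Integrable (fun ω => (U ω) ^ 4) P)
    (hV4 : Integrable (fun ω => (V ω) ^ 4) P)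
    -- X, U, V mutually independent
    (hXU : IndepFun X U P)
    (hXUV : IndepFun (fun ω => (X ω, U ω)) V P)
    -- f bounded measurable on the cube, r = f²
    (f : (Fin d → ℝ) → ℝ) (hfm : Measurable f)
    (Cf : ℝ) (hf : ∀ x ∈ Set.Icc (0 : Fin d → ℝ) 1, |f x| ≤ Cf)
    (r : (Fin d → ℝ) → ℝ) (hr : ∀ x, r x = (f x) ^ 2)
    -- E[U²] = 1 and (E[U] = 0 or E[V] = 0)
    (hU2 : ∫ ω, (U ω) ^ 2 ∂P = 1)
    (hcent : (∫ ω, U ω ∂P = 0) ∨ (∫ ω, V ω ∂P = 0))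
    -- Ψ bounded measurable on the cube with zero integral
    (Ψ : (Fin d → ℝ) → ℝ) (hΨm : Measurable Ψ)
    (CΨ : ℝ) (hΨ : ∀ x ∈ Set.Icc (0 : Fin d → ℝ) 1, |Ψ x| ≤ CΨ)
    (hΨ0 : ∫ x in Set.Icc (0 : Fin d → ℝ) 1, Ψ x = 0) :
    ∃ κ : ℝ, 0 < κ ∧
      ∀ (n : ℕ), 3 ≤ n →
        ∀ (Xs : Fin n → Ω → (Fin d → ℝ)) (Us Vs : Fin n → Ω → ℝ),
          (∀ i, Measurable (Xs i)) → (∀ i, Measurable (Us i)) →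
          (∀ i, Measurable (Vs i)) →
          iIndepFun
            (fun i ω => (Xs i ω, Us i ω, Vs i ω)) P →
          (∀ i, IdentDistrib (fun ω => (Xs i ω, Us i ω, Vs i ω))
            (fun ω => (X ω, U ω, V ω)) P P) →
          P {ω | κ * Real.sqrt (Real.log n / n)
                  ≤ |(1 / (n : ℝ)) * (∑ i,
                        if |(f (Xs i ω) * Us i ω + Vs i ω) ^ 2 * Ψ (Xs i ω)|
                            ≤ Real.sqrt ((n : ℝ) / Real.log n)
                          then (f (Xs i ω) * Us i ω + Vs i ω) ^ 2 * Ψ (Xs i ω)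
                          else 0)
                      - ∫ x in Set.Icc (0 : Fin d → ℝ) 1, r x * Ψ x|}
            ≤ ENNReal.ofReal (2 / (n : ℝ) ^ 4) := by
  have hcube : ∀ᵐ ω ∂P, X ω ∈ Set.Icc (0 : Fin d → ℝ) 1 :=
    ae_of_ae_map hXm.aemeasurable (hXlaw ▸ ae_restrict_mem measurableSet_Icc)
  have hfX : ∀ᵐ ω ∂P, |f (X ω)| ≤ Cf := hcube.mono fun ω h => hf _ h
  have hΨX : ∀ᵐ ω ∂P, |Ψ (X ω)| ≤ CΨ := hcube.mono fun ω h => hΨ _ h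
  have hlaw : ∀ g : (Fin d → ℝ) → ℝ, Measurable g →
      ∫ ω, g (X ω) ∂P = ∫ x in Set.Icc (0 : Fin d → ℝ) 1, g x := fun g hg => by
    rw [← integral_map hXm.aemeasurable hg.aestronglyMeasurable, hXlaw]
  set w : (Fin d → ℝ) × ℝ × ℝ → ℝ := fun p => (f p.1 * p.2.1 + p.2.2) ^ 2 * Ψ p.1
  have hw : Measurable w := by fun_prop
  have hW : MemLp (fun ω => w (X ω, U ω, V ω)) 2 P :=
    memLp_two_sq_add_mul (hfm.comp hXm).aestronglyMeasurable (hΨm.comp hXm).aestronglyMeasurable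
      hUm.aestronglyMeasurable hVm.aestronglyMeasurable hfX hΨX hU4 hV4
  have hmean :
      ∫ ω, w (X ω, U ω, V ω) ∂P = ∫ x in Set.Icc (0 : Fin d → ℝ) 1, r x * Ψ x := by
    rw [integral_sq_add_mul_eq hXm hfm hΨm hfX hΨX hXU hXUV
      (memLp_two_of_integrable_pow_four hUm.aestronglyMeasurable hU4)
      (memLp_two_of_integrable_pow_four hVm.aestronglyMeasurable hV4), hU2,
      hlaw Ψ hΨm, hΨ0, hlaw (fun x => f x ^ 2 * Ψ x) (by fun_prop)]
    rcases hcent with h | h <;> simp [h, hr]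
  have hm : 0 ≤ P[(fun ω => w (X ω, U ω, V ω)) ^ 2] := integral_nonneg fun _ => sq_nonneg _
  refine ⟨2 * P[(fun ω => w (X ω, U ω, V ω)) ^ 2] + 8, by positivity,
    fun n hn Xs Us Vs hXs hUs hVs hind hid => ?_⟩
  have := measure_truncated_mean_deviation_le_two_div_pow_four hW (by omega)
    (fun i => hw.comp ((hXs i).prodMk ((hUs i).prodMk (hVs i)))) (hind.comp _ fun _ => hw)
    (fun i => (hid i).comp hw)
  -- the estimator of the statement is `truncate` applied to `w` along the sample, unfolded
  rwa [hmean] at this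

/-- Lemma 3 of the paper, assumption set H1.
Assume `∫ Ψ = 0` and let `β = ∫ r Ψ`. There is a constant `κ > 0` (depending only
on the fixed quantities of the model, in particular on `E[U⁴]`, `E[V⁴]`, `‖f‖_∞`
and `∫ Ψ²`, but not on `n` or on the i.i.d. sample) such that for every `n ≥ 3`,
the truncated estimator `β̂ = (1/n) Σᵢ Yᵢ² Ψ(Xᵢ) 1_{|Yᵢ² Ψ(Xᵢ)| ≤ ρₙ}` with
`ρₙ = √(n / ln n)` satisfies `P(|β̂ − β| ≥ κ √((ln n)/n)) ≤ 2 n⁻⁴`. -/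
theorem truncated_coefficient_concentration_H1
    {Ω : Type*} [MeasurableSpace Ω] (P : Measure Ω) [IsProbabilityMeasure P]
    (d : ℕ) (hd : 1 ≤ d)
    (X : Ω → (Fin d → ℝ)) (U V : Ω → ℝ)
    (hXm : Measurable X) (hUm : Measurable U) (hVm : Measurable V)
    -- X is uniformly distributed on the cube [0,1]^d
    (hXlaw : Measure.map X P = volume.restrict (Set.Icc (0 : Fin d → ℝ) 1))
    -- E[U⁴] < ∞ and E[V⁴] < ∞
    (hU4 : Integrable (fun ω => (U ω) ^ 4) P)
    (hV4 : Integrable (fun ω => (V ω) ^ 4) P)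
    -- X, U, V mutually independent
    (hXU : IndepFun X U P)
    (hXUV : IndepFun (fun ω => (X ω, U ω)) V P)
    -- f bounded measurable on the cube, r = f²
    (f : (Fin d → ℝ) → ℝ) (hfm : Measurable f)
    (Cf : ℝ) (hf : ∀ x ∈ Set.Icc (0 : Fin d → ℝ) 1, |f x| ≤ Cf)
    (r : (Fin d → ℝ) → ℝ) (hr : ∀ x, r x = (f x) ^ 2)
    -- E[U²] = 1 and (E[U] = 0 or E[V] = 0)
    (hU2int : Integrable (fun ω => (U ω) ^ 2) P)
    (hU2 : ∫ ω, (U ω) ^ 2 ∂P = 1)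
    (hcent : (∫ ω, U ω ∂P = 0) ∨ (∫ ω, V ω ∂P = 0))
    -- Ψ bounded measurable on the cube with zero integral
    (Ψ : (Fin d → ℝ) → ℝ) (hΨm : Measurable Ψ)
    (CΨ : ℝ) (hΨ : ∀ x ∈ Set.Icc (0 : Fin d → ℝ) 1, |Ψ x| ≤ CΨ)
    (hΨ0 : ∫ x in Set.Icc (0 : Fin d → ℝ) 1, Ψ x = 0) :
    ∃ κ : ℝ, 0 < κ ∧
      ∀ (n : ℕ), 3 ≤ n →
        ∀ (Xs : Fin n → Ω → (Fin d → ℝ)) (Us Vs : Fin n → Ω → ℝ),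
          (∀ i, Measurable (Xs i)) → (∀ i, Measurable (Us i)) →
          (∀ i, Measurable (Vs i)) →
          iIndepFun
            (fun i ω => (Xs i ω, Us i ω, Vs i ω)) P →
          (∀ i, IdentDistrib (fun ω => (Xs i ω, Us i ω, Vs i ω))
            (fun ω => (X ω, U ω, V ω)) P P) →
          P {ω | κ * Real.sqrt (Real.log n / n)
                  ≤ |(1 / (n : ℝ)) * (∑ i,
                        if |(f (Xs i ω) * Us i ω + Vs i ω) ^ 2 * Ψ (Xs i ω)|
                            ≤ Real.sqrt ((n : ℝ) / Real.log n)
                          then (f (Xs i ω) * Us i ω + Vs i ω) ^ 2 * Ψ (Xs i ω)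
                          else 0)
                      - ∫ x in Set.Icc (0 : Fin d → ℝ) 1, r x * Ψ x|}
            ≤ ENNReal.ofReal (2 / (n : ℝ) ^ 4) :=
  truncated_coefficient_concentration_H1_general P d X U V hXm hUm hVm hXlaw hU4 hV4 hXU hXUV f hfm
    Cf hf r hr hU2 hcent Ψ hΨm CΨ hΨ hΨ0
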